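/- arXiv:2301.09958 — 6 statements merged into one kernel-verified Lean document; each statement's English description precedes it below -/
import Mathlib

section
/- Define sequences of matrices over a commutative ring by m₀ given, mₙ₊₁ = mₙ·bₙ·mₙ for given invertible-entry matrices bₙ (2×2), let lₙ be a scalar depending on mₙ as lₙ = (mₙ[0,1] + mₙ[1,0])/εₙ + mₙ[0,0], and Lₙ₊₁ = Lₙ·lₙ with L₀ = 1. If the sequence (εₙ) is periodic with period n, then for all j ≥ 0, L_{n+j} = Lₙ^{2^j}·L_j. -/
/-- Setup of Section 2 of the paper: over a field `K` of characteristic 2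
(e.g. `F₂((1/a₀,…,1/a_k))`), `m₀` is the product (in reverse order) of the
matrices `[[1,1/w],[1/w,0]]` over the letters `w` of a finite word `W₀`,
`(εₙ)` is a periodic sequence of period `n` of nonzero elements (the
variables), `mₙ₊₁ = mₙ·[[1,1/εₙ],[1/εₙ,0]]·mₙ`,
`lₙ = (mₙ[0,1]+mₙ[1,0])/εₙ + mₙ[0,0]`, `L₀ = 1`, `Lₙ₊₁ = Lₙ·lₙ`.
Then `L_{n+j} = Lₙ^{2^j}·L_j` for all `j ≥ 0`. -/
theorem L_periodic_power {K : Type*} [Field K] [CharP K 2]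
    (W₀ : List K) (hW₀ : ∀ w ∈ W₀, w ≠ 0)
    (eps : ℕ → K) (heps : ∀ i, eps i ≠ 0)
    (n : ℕ) (hn : 0 < n) (hper : ∀ i, eps (i + n) = eps i)
    (m : ℕ → Matrix (Fin 2) (Fin 2) K)
    (hm0 : m 0 = (W₀.reverse.map fun w => !![1, w⁻¹; w⁻¹, 0]).prod)
    (hm : ∀ i, m (i + 1) = m i * !![1, (eps i)⁻¹; (eps i)⁻¹, 0] * m i)
    (l : ℕ → K) (hl : ∀ i, l i = (m i 0 1 + m i 1 0) / eps i + m i 0 0)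
    (L : ℕ → K) (hL0 : L 0 = 1) (hLs : ∀ i, L (i + 1) = L i * l i) :
    ∀ j, L (n + j) = L n ^ 2 ^ j * L j := by
  have h2 : (2 : K) = 0 := by exact_mod_cast CharP.cast_eq_zero K 2
  set a0 : K := m 0 0 0 with ha0
  set s0 : K := m 0 0 1 + m 0 1 0 with hs0
  -- key invariant
  have key : ∀ i, m i 0 0 = L i * a0 ∧ m i 0 1 + m i 1 0 = L i * s0 := by
    intro i
    induction i with
    | zero => simp [hL0, ha0, hs0]
    | succ i ih =>
      obtain ⟨h00, h01⟩ := ih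
      have e00 : m (i + 1) 0 0 = m i 0 0 * l i := by
        rw [hm i]
        simp only [Matrix.mul_apply, Fin.sum_univ_two]
        norm_num [Matrix.cons_val', Matrix.cons_val_zero,
          Matrix.cons_val_one, Matrix.head_cons, Matrix.empty_val', Matrix.cons_val_fin_one,
          Matrix.head_fin_const]
        rw [hl i, div_eq_mul_inv]
        linear_combination
      have e01 : m (i + 1) 0 1 + m (i + 1) 1 0 = (m i 0 1 + m i 1 0) * l i := by
        rw [hm i]
        simp only [Matrix.mul_apply, Fin.sum_univ_two]
        norm_num [Matrix.cons_val', Matrix.cons_val_zero,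
          Matrix.cons_val_one, Matrix.head_cons, Matrix.empty_val', Matrix.cons_val_fin_one,
          Matrix.head_fin_const]
        rw [hl i, div_eq_mul_inv]
        linear_combination (m i 0 0 * m i 1 1 * (eps i)⁻¹ - m i 0 1 * m i 1 0 * (eps i)⁻¹) * h2
      constructor
      · rw [e00, h00, hLs i]; ring
      · rw [e01, h01, hLs i]; ring
  -- consequence: l i = L i * g (eps i)
  have hli : ∀ i, l i = L i * (s0 / eps i + a0) := by
    intro i
    rw [hl i, (key i).1, (key i).2]
    ring
  intro j
  induction j with
  | zero => simp [hL0]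
  | succ j ih =>
    have : n + (j + 1) = (n + j) + 1 := by ring
    rw [this, hLs (n + j), ih, hLs j, hli (n + j), hli j]
    have hpe : eps (n + j) = eps j := by
      have := hper j; rwa [Nat.add_comm j n] at this
    rw [hpe, ih]
    ring
end

section
/- With the same setup (mₙ₊₁ = mₙ·[[1,1/εₙ],[1/εₙ,0]]·mₙ, lₙ = (mₙ[0,1]+mₙ[1,0])/εₙ + mₙ[0,0], L₀=1, Lₙ₊₁=Lₙ·lₙ, (εₙ) periodic of period n), for all j ≥ 0 one has l_{n+j} = Lₙ^{2^j}·l_j. -/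
/-!
For 2×2 matrices Cayley–Hamilton gives `A * B * A = tr (A * B) • A - det A • adj B`, and for
`B = !![1, e; e, 0]` the adjugate has the shape `!![0, q; q, r]`. Modulo the submodule `S` of
such matrices the recurrence therefore becomes linear, `mᵢ₊₁ ≡ lᵢ • mᵢ`, where `lᵢ = tr (mᵢ * Bᵢ)`;
in characteristic 2 this trace functional vanishes on `S`. Hence `mₙ ≡ Lₙ • m₀`, and if
`m_{n+j} ≡ c • mⱼ` then, by periodicity of `ε`, `l_{n+j} = c * lⱼ` and
`m_{n+j+1} ≡ (c * lⱼ) • c • mⱼ ≡ c ^ 2 • mⱼ₊₁`; induction on `j` with `c = Lₙ ^ 2 ^ j` concludes.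
-/

open Finset Matrix

section TwistedRecurrence

variable {R M : Type*} [CommRing R] [AddCommGroup M] [Module R M]
  {U : Submodule R M} {f : ℕ → M} {φ : ℕ → M →ₗ[R] R}

theorem LinearMap.eq_of_smodEq {g : M →ₗ[R] R} (hg : U ≤ LinearMap.ker g) {x y : M}
    (h : x ≡ y [SMOD U]) : g x = g y := by
  rw [← sub_eq_zero, ← map_sub]
  exact hg (SModEq.sub_mem.mp h)

theorem smodEq_prod_smul_zero (hf : ∀ i, f (i + 1) ≡ φ i (f i) • f i [SMOD U]) (i : ℕ) :
    f i ≡ (∏ k ∈ range i, φ k (f k)) • f 0 [SMOD U] := by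
  induction i with
  | zero => simp
  | succ i ih =>
    rw [prod_range_succ, mul_comm, mul_smul]
    exact (hf i).trans (ih.smul _)

theorem smodEq_sq_smul_succ (hU : ∀ i, U ≤ LinearMap.ker (φ i))
    (hf : ∀ i, f (i + 1) ≡ φ i (f i) • f i [SMOD U]) {i j : ℕ} (hφ : φ i = φ j) {c : R}
    (h : f i ≡ c • f j [SMOD U]) :
    φ i (f i) = c * φ j (f j) ∧ f (i + 1) ≡ c ^ 2 • f (j + 1) [SMOD U] := by
  have hval : φ i (f i) = c * φ j (f j) := by
    rw [LinearMap.eq_of_smodEq (hU i) h, hφ, map_smul, smul_eq_mul]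
  refine ⟨hval, ?_⟩
  calc f (i + 1) ≡ φ i (f i) • f i [SMOD U] := hf i
    _ ≡ φ i (f i) • c • f j [SMOD U] := h.smul _
    _ = c ^ 2 • (φ j (f j) • f j) := by rw [hval, smul_smul, smul_smul, sq, mul_right_comm]
    _ ≡ c ^ 2 • f (j + 1) [SMOD U] := (hf j).symm.smul _

theorem apply_add_period_eq_pow_two_pow_mul (hU : ∀ i, U ≤ LinearMap.ker (φ i))
    (hf : ∀ i, f (i + 1) ≡ φ i (f i) • f i [SMOD U]) {n : ℕ} (hper : ∀ i, φ (i + n) = φ i)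
    (j : ℕ) : φ (n + j) (f (n + j)) = (∏ k ∈ range n, φ k (f k)) ^ 2 ^ j * φ j (f j) := by
  have hφ : ∀ j, φ (n + j) = φ j := fun j => by rw [add_comm, hper]
  have hmod : ∀ j, f (n + j) ≡ (∏ k ∈ range n, φ k (f k)) ^ 2 ^ j • f j [SMOD U] := by
    intro j
    induction j with
    | zero => simpa using smodEq_prod_smul_zero hf n
    | succ j ih =>
      rw [pow_succ, pow_mul]
      exact (smodEq_sq_smul_succ hU hf (hφ j) ih).2
  exact (smodEq_sq_smul_succ hU hf (hφ j) (hmod j)).1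

end TwistedRecurrence

namespace Matrix

variable {R : Type*} [CommRing R]

theorem mul_mul_self_fin_two (A B : Matrix (Fin 2) (Fin 2) R) :
    A * B * A = trace (A * B) • A - A.det • B.adjugate := by
  ext i j
  fin_cases i <;> fin_cases j <;>
    simp [mul_apply, Fin.sum_univ_two, trace_fin_two, det_fin_two, adjugate_fin_two] <;> ring

variable (R) in
def symmZeroCorner : Submodule R (Matrix (Fin 2) (Fin 2) R) where
  carrier := {A | A 0 0 = 0 ∧ A 0 1 = A 1 0}
  add_mem' := by
    rintro A B ⟨hA₀, hA₁⟩ ⟨hB₀, hB₁⟩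
    simp [hA₀, hA₁, hB₀, hB₁]
  zero_mem' := by simp
  smul_mem' := by
    rintro c A ⟨hA₀, hA₁⟩
    simp [hA₀, hA₁]

theorem adjugate_mem_symmZeroCorner (a e : R) : adjugate !![a, e; e, 0] ∈ symmZeroCorner R := by
  simp [symmZeroCorner, adjugate_fin_two_of]

theorem mul_mul_self_smodEq (A : Matrix (Fin 2) (Fin 2) R) (a e : R) :
    A * !![a, e; e, 0] * A ≡ trace (A * !![a, e; e, 0]) • A [SMOD symmZeroCorner R] := by
  rw [mul_mul_self_fin_two, SModEq.sub_mem, sub_sub_cancel_left, neg_mem_iff]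
  exact Submodule.smul_mem _ _ (adjugate_mem_symmZeroCorner a e)

def traceMulRight (B : Matrix (Fin 2) (Fin 2) R) : Matrix (Fin 2) (Fin 2) R →ₗ[R] R :=
  traceLinearMap (Fin 2) R R ∘ₗ LinearMap.mulRight R B

theorem symmZeroCorner_le_ker_traceMulRight [CharP R 2] (a e : R) :
    symmZeroCorner R ≤ LinearMap.ker (traceMulRight !![a, e; e, 0]) := by
  rintro A ⟨hA₀, hA₁⟩
  simp [traceMulRight, trace_fin_two, mul_apply, Fin.sum_univ_two, hA₀, hA₁,
    CharTwo.add_self_eq_zero]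

end Matrix

theorem l_periodic_power_general {K : Type*} [Field K] [CharP K 2]
    (eps : ℕ → K)
    (n : ℕ) (hper : ∀ i, eps (i + n) = eps i)
    (m : ℕ → Matrix (Fin 2) (Fin 2) K)
    (hm : ∀ i, m (i + 1) = m i * !![1, (eps i)⁻¹; (eps i)⁻¹, 0] * m i)
    (l : ℕ → K) (hl : ∀ i, l i = (m i 0 1 + m i 1 0) / eps i + m i 0 0)
    (L : ℕ → K) (hL0 : L 0 = 1) (hLs : ∀ i, L (i + 1) = L i * l i) :
    ∀ j, l (n + j) = L n ^ 2 ^ j * l j := by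
  set φ : ℕ → Matrix (Fin 2) (Fin 2) K →ₗ[K] K :=
    fun i => traceMulRight !![1, (eps i)⁻¹; (eps i)⁻¹, 0]
  have hlφ : ∀ i, l i = φ i (m i) := fun i => by
    rw [hl]
    simp [φ, traceMulRight, trace_fin_two, mul_apply, Fin.sum_univ_two]
    ring
  have hL : ∀ i, L i = ∏ k ∈ range i, φ k (m k) := fun i => by
    induction i with
    | zero => simp [hL0]
    | succ i ih => rw [hLs, ih, hlφ, prod_range_succ]
  intro j
  rw [hL, hlφ, hlφ]
  exact apply_add_period_eq_pow_two_pow_mul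
    (fun i => symmZeroCorner_le_ker_traceMulRight _ _)
    (fun i => by rw [hm]; exact mul_mul_self_smodEq _ _ _)
    (fun i => by simp only [φ, hper]) j

/-- Setup of Section 2 of the paper: over a field `K` of characteristic 2
(e.g. `F₂((1/a₀,…,1/a_k))`), `m₀` is the product (in reverse order) of the
matrices `[[1,1/w],[1/w,0]]` over the letters `w` of a finite word `W₀`,
`(εₙ)` is a periodic sequence of period `n` of nonzero elements (the
variables), `mₙ₊₁ = mₙ·[[1,1/εₙ],[1/εₙ,0]]·mₙ`,
`lₙ = (mₙ[0,1]+mₙ[1,0])/εₙ + mₙ[0,0]`, `L₀ = 1`, `Lₙ₊₁ = Lₙ·lₙ`.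
Then `l_{n+j} = Lₙ^{2^j}·l_j` for all `j ≥ 0`. -/
theorem l_periodic_power {K : Type*} [Field K] [CharP K 2]
    (W₀ : List K) (hW₀ : ∀ w ∈ W₀, w ≠ 0)
    (eps : ℕ → K) (heps : ∀ i, eps i ≠ 0)
    (n : ℕ) (hn : 0 < n) (hper : ∀ i, eps (i + n) = eps i)
    (m : ℕ → Matrix (Fin 2) (Fin 2) K)
    (hm0 : m 0 = (W₀.reverse.map fun w => !![1, w⁻¹; w⁻¹, 0]).prod)
    (hm : ∀ i, m (i + 1) = m i * !![1, (eps i)⁻¹; (eps i)⁻¹, 0] * m i)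
    (l : ℕ → K) (hl : ∀ i, l i = (m i 0 1 + m i 1 0) / eps i + m i 0 0)
    (L : ℕ → K) (hL0 : L 0 = 1) (hLs : ∀ i, L (i + 1) = L i * l i) :
    ∀ j, l (n + j) = L n ^ 2 ^ j * l j :=
  l_periodic_power_general eps n hper m hm l hl L hL0 hLs
end

section
/- With the setup mₙ₊₁ = mₙ·[[1,1/εₙ],[1/εₙ,0]]·mₙ over F₂((1/a₀,…,1/a_k)), where m₀ is a product of matrices [[1,1/w],[1/w,0]], one has for all k ≥ 0: val(m_k[0,0]) = 0 and val(m_k[i,j]) > 0 for (i,j) ≠ (0,0), where val is the valuation assigning to a series the minimal total degree (in the inverse variables) of a nonzero term. -/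
/-!
Reduce modulo the elements of positive valuation. Each factor `!![1, x; x, 0]` with `v x > 0`
then becomes the idempotent `!![1, 0; 0, 0]`, and the matrices with this reduction, i.e. with
`(0,0)` entry of valuation `0` and all other entries of positive valuation, are closed under
multiplication. Hence `m₀`, a nonempty product of such factors, lies in this set, and so does
every `mₙ₊₁ = mₙ · !![1, 1/εₙ; 1/εₙ, 0] · mₙ`.
-/

namespace AddValuation

variable {R Γ₀ : Type*} [Ring R] [LinearOrderedAddCommMonoidWithTop Γ₀] (v : AddValuation R Γ₀)

def cornerMatrices : Subsemigroup (Matrix (Fin 2) (Fin 2) R) where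
  carrier := {m | v (m 0 0) = 0 ∧ 0 < v (m 0 1) ∧ 0 < v (m 1 0) ∧ 0 < v (m 1 1)}
  mul_mem' := by
    rintro m n ⟨m00, m01, m10, m11⟩ ⟨n00, n01, n10, n11⟩
    have entry : ∀ i j, (m * n) i j = m i 0 * n 0 j + m i 1 * n 1 j := fun i j => by
      rw [Matrix.mul_apply, Fin.sum_univ_two]
    have pos_left : ∀ {x y : R}, 0 < v x → 0 ≤ v y → 0 < v (x * y) := fun hx hy => by
      rw [v.map_mul]; exact Left.add_pos_of_pos_of_nonneg hx hy
    have pos_right : ∀ {x y : R}, 0 ≤ v x → 0 < v y → 0 < v (x * y) := fun hx hy => by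
      rw [v.map_mul]; exact Right.add_pos_of_nonneg_of_pos hx hy
    have unit_corner : v (m 0 0 * n 0 0) = 0 := by rw [v.map_mul, m00, n00, add_zero]
    refine ⟨?_, ?_, ?_, ?_⟩ <;> rw [entry]
    · rw [v.map_add_eq_of_lt_left (unit_corner ▸ pos_left m01 n10.le), unit_corner]
    · exact v.map_lt_add (pos_right m00.ge n01) (pos_left m01 n11.le)
    · exact v.map_lt_add (pos_left m10 n00.ge) (pos_left m11 n10.le)
    · exact v.map_lt_add (pos_left m10 n01.le) (pos_left m11 n11.le)

theorem mem_cornerMatrices_of_pos {x : R} (hx : 0 < v x) :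
    !![1, x; x, 0] ∈ v.cornerMatrices := by
  refine ⟨?_, ?_, ?_, ?_⟩ <;> simp [hx, hx.trans_le le_top]

end AddValuation

theorem val_entries_of_m_general {K : Type*} [Field K]
    {ι : Type*} (a : ι → K)
    (v : AddValuation K (WithTop ℤ))
    (ha : ∀ i, v (a i)⁻¹ = (1 : ℤ))
    (W₀ : List ι) (hW₀ : W₀ ≠ [])
    (eps : ℕ → ι)
    (m : ℕ → Matrix (Fin 2) (Fin 2) K)
    (hm0 : m 0 = (W₀.reverse.map fun w => !![1, (a w)⁻¹; (a w)⁻¹, 0]).prod)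
    (hm : ∀ i,
      m (i + 1) = m i * !![1, (a (eps i))⁻¹; (a (eps i))⁻¹, 0] * m i) :
    ∀ k, v (m k 0 0) = (0 : ℤ) ∧
      ∀ i j : Fin 2, ¬(i = 0 ∧ j = 0) → (0 : ℤ) < v (m k i j) := by
  have factor_mem : ∀ w, !![1, (a w)⁻¹; (a w)⁻¹, 0] ∈ v.cornerMatrices := fun w =>
    v.mem_cornerMatrices_of_pos (by rw [ha w]; exact WithTop.coe_pos.2 one_pos)
  have m_mem : ∀ k, m k ∈ v.cornerMatrices := by
    intro k
    induction k with
    | zero =>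
      rw [hm0]
      exact List.prod_induction_nonempty _ (fun _ _ => mul_mem) (by simpa using hW₀)
        (by simpa using fun w _ => factor_mem w)
    | succ n ih => rw [hm n]; exact mul_mem (mul_mem ih (factor_mem _)) ih
  intro k
  obtain ⟨h00, h01, h10, h11⟩ := m_mem k
  refine ⟨h00, fun i j hij => ?_⟩
  fin_cases i <;> fin_cases j <;> simp_all

/-- `K` models the field `F₂((1/a₀,…,1/a_k))`, with additive valuation `v`
(`val φ` = minimal total degree in the inverse variables, so
`v (aᵢ)⁻¹ = 1`).  `m₀` is a nonempty product of matrices `[[1,1/w],[1/w,0]]`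
with `w` a variable, and `mₙ₊₁ = mₙ·[[1,1/εₙ],[1/εₙ,0]]·mₙ` with the `εₙ`
variables.  Then for all `k`, `val (m_k[0,0]) = 0` and `val (m_k[i,j]) > 0`
for `(i,j) ≠ (0,0)`. -/
theorem val_entries_of_m {K : Type*} [Field K] [CharP K 2]
    {ι : Type*} (a : ι → K)
    (v : AddValuation K (WithTop ℤ))
    (ha : ∀ i, v (a i)⁻¹ = (1 : ℤ))
    (W₀ : List ι) (hW₀ : W₀ ≠ [])
    (eps : ℕ → ι)
    (m : ℕ → Matrix (Fin 2) (Fin 2) K)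
    (hm0 : m 0 = (W₀.reverse.map fun w => !![1, (a w)⁻¹; (a w)⁻¹, 0]).prod)
    (hm : ∀ i,
      m (i + 1) = m i * !![1, (a (eps i))⁻¹; (a (eps i))⁻¹, 0] * m i) :
    ∀ k, v (m k 0 0) = (0 : ℤ) ∧
      ∀ i j : Fin 2, ¬(i = 0 ∧ j = 0) → (0 : ℤ) < v (m k i j) :=
  val_entries_of_m_general a v ha W₀ hW₀ eps m hm0 hm
end

section
/- Let σ map a binary sequence (uₙ) to the sequence of partial sums mod 2, (∑_{j<n} uⱼ mod 2)ₙ. Then σ applied to the period-doubling sequence (the fixed point of 1↦10, 0↦11) equals the Thue–Morse sequence. -/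
/-!
Write `S n = ∑_{j<n} p j`. Pairing `p (2j) + p (2j+1) = 2 - p j` gives `S (2m) + S m = 2m`, so
`S (2m) ≡ S m` and `S (2m+1) ≡ S m + 1 (mod 2)`. The binary digit sum obeys the same two
recurrences, hence the two sequences agree mod 2 by induction on the binary expansion.
-/

theorem Nat.digits_sum_add_mul {b r : ℕ} (hb : 1 < b) (hr : r < b) (m : ℕ) :
    (b.digits (r + b * m)).sum = r + (b.digits m).sum := by
  rcases Nat.eq_zero_or_pos m with rfl | hm
  · rcases Nat.eq_zero_or_pos r with rfl | hr0
    · simp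
    · simp [Nat.digits_of_lt b r hr0.ne' hr]
  · rw [Nat.digits_add b hb r m hr (Or.inr hm.ne'), List.sum_cons]

namespace PeriodDoubling

variable {p : ℕ → ℕ}

theorem le_one (hp0 : ∀ n, p (2 * n) = 1) (hp1 : ∀ n, p (2 * n + 1) = 1 - p n)
    (n : ℕ) : p n ≤ 1 := by
  obtain ⟨m, rfl | rfl⟩ := Nat.even_or_odd' n
  · exact (hp0 m).le
  · exact (hp1 m).trans_le (Nat.sub_le 1 _)

theorem sum_range_two_mul_add_sum_range
    (hp0 : ∀ n, p (2 * n) = 1) (hp1 : ∀ n, p (2 * n + 1) = 1 - p n) (m : ℕ) :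
    ∑ j ∈ Finset.range (2 * m), p j + ∑ j ∈ Finset.range m, p j = 2 * m := by
  induction m with
  | zero => simp
  | succ m ih =>
    rw [Nat.mul_succ, Finset.sum_range_succ, Finset.sum_range_succ, Finset.sum_range_succ, hp0,
      hp1]
    have := le_one hp0 hp1 m
    omega

theorem sum_range_two_mul_mod_two
    (hp0 : ∀ n, p (2 * n) = 1) (hp1 : ∀ n, p (2 * n + 1) = 1 - p n) (m : ℕ) :
    (∑ j ∈ Finset.range (2 * m), p j) % 2 = (∑ j ∈ Finset.range m, p j) % 2 := by
  have := sum_range_two_mul_add_sum_range hp0 hp1 m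
  omega

end PeriodDoubling

/-- Let `σ` map a binary sequence to its sequence of partial sums mod 2.
The period-doubling sequence `p` (the fixed point, starting with 1, of the
substitution `1 ↦ 10`, `0 ↦ 11`) is characterized by `p (2n) = 1` and
`p (2n+1) = 1 - p n`.  The Thue–Morse sequence is
`t n = (number of 1's in the binary expansion of n) mod 2`.
Then `σ(p) = t`. -/
theorem sigma_periodDoubling_eq_thueMorse (p : ℕ → ℕ)
    (hp0 : ∀ n, p (2 * n) = 1) (hp1 : ∀ n, p (2 * n + 1) = 1 - p n) :
    ∀ n, (∑ j ∈ Finset.range n, p j) % 2 = (Nat.digits 2 n).sum % 2 := by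
  have digits_sum_two_mul (m : ℕ) : (Nat.digits 2 (2 * m)).sum = (Nat.digits 2 m).sum := by
    simpa using Nat.digits_sum_add_mul one_lt_two two_pos m
  have digits_sum_two_mul_add_one (m : ℕ) :
      (Nat.digits 2 (2 * m + 1)).sum = (Nat.digits 2 m).sum + 1 := by
    rw [add_comm, Nat.digits_sum_add_mul one_lt_two one_lt_two, add_comm]
  refine Nat.evenOddRec (by simp) (fun m ih => ?_) (fun m ih => ?_)
  · rw [PeriodDoubling.sum_range_two_mul_mod_two hp0 hp1, ih, digits_sum_two_mul]
  · rw [Finset.sum_range_succ, hp0, Nat.add_mod, PeriodDoubling.sum_range_two_mul_mod_two hp0 hp1,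
      ih, digits_sum_two_mul_add_one, Nat.add_mod (Nat.digits 2 m).sum]
end

section
/- In an ultrametric complete field of characteristic 2 with valuation val, suppose l satisfies val(l) = 0 and val(l−1) ≥ 1, and define L₀ = 1, Lᵢ₊₁ = Lᵢ^{2^k}·l for a fixed k ≥ 1. Then val(Lᵢ₊₁ − Lᵢ) ≥ 2^{ik} for all i, hence (Lᵢ) converges, and its limit f satisfies f^{2^k} = f/l. -/
/-- In a complete valued field `K` of characteristic 2 (valuation written
multiplicatively with value group `WithZero (Multiplicative ℤ) = WithZero (Multiplicative ℤ)`, so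
`val x ≥ c` reads `v x ≤ ofAdd (-c)`), suppose `val l = 0` (`v l = 1`) and
`val (l - 1) ≥ 1`, and define `L₀ = 1`, `Lᵢ₊₁ = Lᵢ^{2^k}·l` for a fixed
`k ≥ 1`.  Then `val (Lᵢ₊₁ - Lᵢ) ≥ 2^{ik}` for all `i`, the sequence `(Lᵢ)`
converges, and its limit `f` satisfies `f^{2^k} = f / l`. -/
theorem limit_of_L {K : Type*} [Field K]
    [Valued K (WithZero (Multiplicative ℤ))] [CompleteSpace K] [CharP K 2]
    (k : ℕ) (hk : 1 ≤ k) (l : K)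
    (hl0 : Valued.v l = (1 : WithZero (Multiplicative ℤ)))
    (hl1 : Valued.v (l - 1) ≤
      ((Multiplicative.ofAdd (-1 : ℤ) : Multiplicative ℤ) :
        WithZero (Multiplicative ℤ)))
    (L : ℕ → K) (hL0 : L 0 = 1) (hLs : ∀ i, L (i + 1) = L i ^ 2 ^ k * l) :
    (∀ i, Valued.v (L (i + 1) - L i) ≤
      ((Multiplicative.ofAdd (-(2 ^ (i * k)) : ℤ) : Multiplicative ℤ) :
        WithZero (Multiplicative ℤ))) ∧
    ∃ f : K, Filter.Tendsto L Filter.atTop (nhds f) ∧ f ^ 2 ^ k = f / l := by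
  classical
  open Multiplicative Filter in
  haveI : Fact (Nat.Prime 2) := ⟨Nat.prime_two⟩
  have hmain : ∀ i, Valued.v (L (i + 1) - L i) ≤
      ((ofAdd (-(2 ^ (i * k)) : ℤ) : Multiplicative ℤ) : WithZero (Multiplicative ℤ)) := by
    intro i
    induction i with
    | zero =>
      simpa [hLs, hL0] using hl1
    | succ i ih =>
      have hfrob : L (i + 2) - L (i + 1) = (L (i + 1) - L i) ^ 2 ^ k * l := by
        rw [sub_pow_char_pow (R := K) (p := 2) (L (i + 1)) (L i), sub_mul,
          ← hLs (i + 1), ← hLs i]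
      rw [hfrob, Valuation.map_mul, hl0, mul_one, Valuation.map_pow]
      calc Valued.v (L (i + 1) - L i) ^ 2 ^ k
          ≤ (((ofAdd (-(2 ^ (i * k)) : ℤ) : Multiplicative ℤ) : WithZero (Multiplicative ℤ))) ^ 2 ^ k :=
            pow_le_pow_left' ih _
        _ = ((ofAdd (-(2 ^ ((i + 1) * k)) : ℤ) : Multiplicative ℤ) : WithZero (Multiplicative ℤ)) := by
            rw [← WithZero.coe_pow, WithZero.coe_inj, ← ofAdd_nsmul]
            congr 1
            have hik : (i + 1) * k = i * k + k := by ring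
            rw [nsmul_eq_mul, hik, pow_add]
            push_cast
            ring
  refine ⟨hmain, ?_⟩
  have hchain : ∀ N n m, N ≤ n → n ≤ m → Valued.v (L m - L n) ≤
      ((ofAdd (-(2 ^ (N * k)) : ℤ) : Multiplicative ℤ) : WithZero (Multiplicative ℤ)) := by
    intro N n m hNn hnm
    induction m, hnm using Nat.le_induction with
    | base => simp
    | succ m hnm ih =>
      have h1 : Valued.v (L (m + 1) - L m) ≤
          ((ofAdd (-(2 ^ (N * k)) : ℤ) : Multiplicative ℤ) : WithZero (Multiplicative ℤ)) := by
        refine (hmain m).trans ?_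
        rw [WithZero.coe_le_coe, Multiplicative.ofAdd_le, neg_le_neg_iff]
        exact pow_le_pow_right₀ one_le_two (Nat.mul_le_mul_right k (hNn.trans hnm))
      have heq : L (m + 1) - L n = (L (m + 1) - L m) + (L m - L n) := by ring
      rw [heq]
      exact le_trans (Valuation.map_add _ _ _) (max_le h1 ih)
  have hcauchy : CauchySeq L := by
    rw [show CauchySeq L ↔ Cauchy (atTop.map L) from Iff.rfl, Valued.cauchy_iff]
    refine ⟨map_neBot, fun γ => ?_⟩
    obtain ⟨γ, hγe⟩ : ∃ γ' : (WithZero (Multiplicative ℤ))ˣ, (γ' : WithZero (Multiplicative ℤ)) =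
        MonoidWithZeroHom.ValueGroup₀.embedding γ.1 :=
      ⟨Units.mk0 _ (MonoidWithZeroHom.ValueGroup₀.embedding_unit_ne_zero γ), rfl⟩
    simp_rw [Valuation.restrict_lt_iff_lt_embedding, ← hγe]
    set g : ℤ := toAdd (WithZero.unzero γ.ne_zero) with hg
    set N : ℕ := g.natAbs + 1 with hN
    have hlt : ((ofAdd (-(2 ^ (N * k)) : ℤ) : Multiplicative ℤ) : WithZero (Multiplicative ℤ)) < γ := by
      have hγ : (γ : WithZero (Multiplicative ℤ)) = ((ofAdd g : Multiplicative ℤ) : WithZero (Multiplicative ℤ)) := by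
        rw [hg, ofAdd_toAdd, WithZero.coe_unzero]
      rw [hγ, WithZero.coe_lt_coe, Multiplicative.ofAdd_lt]
      have h0 : N ≤ N * k := Nat.le_mul_of_pos_right N (by omega)
      have h1 : (N : ℤ) ≤ 2 ^ (N * k) := by
        exact_mod_cast (h0.trans (Nat.lt_two_pow_self (n := N * k)).le)
      have h2 : -(N : ℤ) < g := by
        have h3 : -g ≤ (g.natAbs : ℤ) := by
          rcases Int.natAbs_eq g with h | h
          · omega
          · omega
        have h4 : (g.natAbs : ℤ) < N := by exact_mod_cast Nat.lt_succ_self _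
        linarith
      linarith
    refine ⟨L '' Set.Ici N, image_mem_map (Ici_mem_atTop N), ?_⟩
    rintro x ⟨n, hn, rfl⟩ y ⟨m, hm, rfl⟩
    rcases le_total n m with h | h
    · exact lt_of_le_of_lt (hchain N n m hn h) hlt
    · rw [← Valuation.map_neg, neg_sub]
      exact lt_of_le_of_lt (hchain N m n hm h) hlt
  obtain ⟨f, hf⟩ := cauchySeq_tendsto_of_complete hcauchy
  have hl_ne : l ≠ 0 := by
    intro h; rw [h] at hl0; simp at hl0
  have h1 : Filter.Tendsto (fun i => L (i + 1)) atTop (nhds f) :=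
    hf.comp (tendsto_add_atTop_nat 1)
  have h2 : Filter.Tendsto (fun i => L i ^ 2 ^ k * l) atTop (nhds (f ^ 2 ^ k * l)) :=
    (hf.pow _).mul tendsto_const_nhds
  have h3 : f ^ 2 ^ k * l = f := tendsto_nhds_unique (by simpa [hLs] using h2) h1
  exact ⟨f, hf, by rw [eq_div_iff hl_ne]; exact h3⟩
end

section
/- Let m₀, w₀ be 2×2 matrices over a field of characteristic 2, m₁ = w₀m₀, w₁ = m₀w₀, d = det(m₁), r = trace(m₁), co = m₁ + w₁ + r·I, and assume r and co are invertible (as needed). Define the Thue–Morse iteration mₖ₊₁ = wₖmₖ, wₖ₊₁ = mₖwₖ. Then m₃ = (m₁ + (d/co) + (d²/(r·co²)))·l where l = r·co² (note co² is scalar, so these quotients make sense). -/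
/-!
In characteristic 2 the Cayley–Hamilton theorem for a 2×2 matrix `x` reads
`x² = tr x • x + det x • 1`, and `m₁ = w₀m₀`, `w₁ = m₀w₀` share the trace `r` and the
determinant `d`. Hence `co m₁ = w₁m₁ + d` and `co w₁ = m₁w₁ + d`, which gives
`m₁w₁m₁ = co² m₁ + d co + d m₁`, and then `m₃ = m₁w₁²m₁ = r co² m₁ + r d co + d²`.
Only these quadratic relations are used, so the middle step holds in any algebra of
characteristic 2.
-/

namespace Matrix

theorem mul_self_fin_two {R : Type*} [CommRing R] (A : Matrix (Fin 2) (Fin 2) R) :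
    A * A = A.trace • A - A.det • (1 : Matrix (Fin 2) (Fin 2) R) := by
  ext i j
  fin_cases i <;> fin_cases j <;>
    simp [mul_apply, Fin.sum_univ_two, trace_fin_two, det_fin_two] <;> ring

theorem mul_self_fin_two_of_charTwo {R : Type*} [CommRing R] [CharP R 2]
    (A : Matrix (Fin 2) (Fin 2) R) :
    A * A = A.trace • A + A.det • (1 : Matrix (Fin 2) (Fin 2) R) := by
  rw [mul_self_fin_two, CharTwo.sub_eq_add]

end Matrix

section QuadraticPair

variable {R A : Type*} [CommRing R] [Ring A] [CharP A 2] [Algebra R A] {a b c : A} {r d : R}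

theorem add_add_smul_one_mul_of_mul_self_eq (ha : a * a = r • a + d • 1) :
    (a + b + r • 1) * a = b * a + d • 1 := by
  rw [add_mul, add_mul, ha, smul_one_mul]
  calc r • a + d • 1 + b * a + r • a = (r • a + r • a) + (b * a + d • 1) := by abel
    _ = b * a + d • 1 := by rw [CharTwo.add_self_eq_zero, zero_add]

theorem mul_mul_eq_of_mul_self_eq (ha : a * a = r • a + d • 1) (hb : b * b = r • b + d • 1)
    (hc : c = a + b + r • 1) :
    a * b * a = c * c * a + d • c + d • a := by
  have hca : b * a = c * a + d • 1 := by
    rw [hc, add_add_smul_one_mul_of_mul_self_eq ha, add_assoc, CharTwo.add_self_eq_zero,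
      add_zero]
  have hcb : a * b = c * b + d • 1 := by
    rw [hc, add_comm a b, add_add_smul_one_mul_of_mul_self_eq hb, add_assoc,
      CharTwo.add_self_eq_zero, add_zero]
  calc a * b * a = c * (b * a) + d • a := by rw [hcb, add_mul, smul_one_mul, mul_assoc]
    _ = c * c * a + d • c + d • a := by rw [hca, mul_add, mul_smul_one, mul_assoc]

theorem mul_mul_mul_eq_of_mul_self_eq (ha : a * a = r • a + d • 1)
    (hb : b * b = r • b + d • 1) (hc : c = a + b + r • 1) :
    a * b * (b * a) = r • (c * c * a) + (r * d) • c + d ^ 2 • 1 := by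
  calc a * b * (b * a) = r • (a * b * a) + d • (a * a) := by
        rw [mul_assoc, ← mul_assoc b, hb, add_mul, mul_add, smul_mul_assoc, mul_smul_comm,
          smul_one_mul, mul_smul_comm, mul_assoc]
    _ = r • (c * c * a) + (r * d) • c + d ^ 2 • 1 + ((r * d) • a + (r * d) • a) := by
        rw [mul_mul_eq_of_mul_self_eq ha hb hc, ha]
        simp only [smul_add, smul_smul, mul_comm d r, sq]
        abel
    _ = r • (c * c * a) + (r * d) • c + d ^ 2 • 1 := by
        rw [CharTwo.add_self_eq_zero, add_zero]

end QuadraticPair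

/-- Key relation (⋆) for the Thue–Morse continued fraction.  Over a field `K`
of characteristic 2, let `m₀, w₀` be 2×2 matrices, `m₁ = w₀m₀`, `w₁ = m₀w₀`,
`d = det m₁`, `r = trace m₁`, `co = m₁ + w₁ + r·I`, with the Thue–Morse
iteration `m₂ = w₁m₁`, `w₂ = m₁w₁`, `m₃ = w₂m₂`.  Suppose `r ≠ 0` and
`co² = s·I` is a nonzero scalar matrix (so `co⁻¹ = s⁻¹·co`,
`(co²)⁻¹ = s⁻¹·I`).  Then
`m₃ = (m₁ + d·co⁻¹ + d²·r⁻¹·(co²)⁻¹)·(r·co²)`. -/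
theorem thueMorse_key_relation {K : Type*} [Field K] [CharP K 2]
    (m₀ w₀ m₁ w₁ m₂ w₂ m₃ co : Matrix (Fin 2) (Fin 2) K) (d r s : K)
    (hm1 : m₁ = w₀ * m₀) (hw1 : w₁ = m₀ * w₀)
    (hd : d = m₁.det) (hr : r = m₁.trace)
    (hco : co = m₁ + w₁ + r • (1 : Matrix (Fin 2) (Fin 2) K))
    (hm2 : m₂ = w₁ * m₁) (hw2 : w₂ = m₁ * w₁) (hm3 : m₃ = w₂ * m₂)
    (hrne : r ≠ 0) (hsne : s ≠ 0)
    (hs : co * co = s • (1 : Matrix (Fin 2) (Fin 2) K)) :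
    m₃ = (m₁ + (d * s⁻¹) • co +
        (d ^ 2 * r⁻¹ * s⁻¹) • (1 : Matrix (Fin 2) (Fin 2) K)) *
      ((r * s) • (1 : Matrix (Fin 2) (Fin 2) K)) := by
  have hm : m₁ * m₁ = r • m₁ + d • 1 := by rw [hr, hd, Matrix.mul_self_fin_two_of_charTwo]
  have hw : w₁ * w₁ = r • w₁ + d • 1 := by
    rw [hr, hd, Matrix.mul_self_fin_two_of_charTwo, hm1, hw1, Matrix.trace_mul_comm,
      Matrix.det_mul, Matrix.det_mul, mul_comm]
  rw [hm3, hw2, hm2, mul_mul_mul_eq_of_mul_self_eq hm hw hco, hs, smul_one_mul,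
    Matrix.mul_smul, mul_one]
  match_scalars <;> field_simp
end
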